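/- Let H ≥ 1 be an integer and let X_1, …, X_H be independent random variables, each uniformly distributed on the unit circle {z ∈ ℂ : |z| = 1}, and set Z_H = X_1 + ⋯ + X_H. For non-negative integers k and l, E[Z_H^k · (conj Z_H)^l] equals B_k(H) if k = l, and equals 0 if k ≠ l. -/

import Mathlib

open MeasureTheory ProbabilityTheory Complex Finset

/-- The uniform probability measure on the unit circle `{z ∈ ℂ : |z| = 1}`. -/
noncomputable def uniformCircle : Measure ℂ :=
  Measure.map (fun t : ℝ => Complex.exp (2 * Real.pi * t * Complex.I))
    (volume.restrict (Set.Icc 0 1))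

/-- `B_k(H)`: the number of tuples `(y_1,…,y_k,z_1,…,z_k)` of integers in `{1,…,H}` such that
the multisets `{y_1,…,y_k}` and `{z_1,…,z_k}` coincide. -/
noncomputable def Bcount (k H : ℕ) : ℕ :=
  Nat.card {p : (Fin k → ℕ) × (Fin k → ℕ) //
    (∀ j, p.1 j ∈ Finset.Icc 1 H) ∧ (∀ j, p.2 j ∈ Finset.Icc 1 H) ∧
    Multiset.map p.1 Finset.univ.val = Multiset.map p.2 Finset.univ.val}

/-!
Expanding both powers writes `Z_H^k conj(Z_H)^l` as a sum, over index maps `p : Fin k → Fin H`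
and `q : Fin l → Fin H`, of monomials `∏ i, X (p i) * ∏ i, conj (X (q i))`. Grouping equal
indices, such a monomial is `∏ j, X_j^{a_j} conj(X_j)^{b_j}` with `a`, `b` the multiplicities of
`p`, `q`; by independence its expectation is `∏ j, E[X_j^{a_j} conj(X_j)^{b_j}]`, and
`E[X^a conj(X)^b] = ∫₀¹ e^{2πi(a-b)t} dt` is `1` if `a = b` and `0` otherwise. So a monomial has
expectation `1` when `p` and `q` take the same multiset of values and `0` otherwise, and counting
such pairs gives `B_k(H)` if `k = l` and nothing if `k ≠ l`.
-/

open ComplexConjugate Real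

lemma integral_exp_two_pi_I_int_mul (n : ℤ) :
    ∫ t in Set.Icc (0 : ℝ) 1, exp (2 * π * I * n * t) = if n = 0 then 1 else 0 := by
  rw [integral_Icc_eq_integral_Ioc, ← intervalIntegral.integral_of_le zero_le_one]
  split_ifs with hn
  · simp [hn]
  · have hc : 2 * π * I * n ≠ 0 := by simp [Real.pi_ne_zero, I_ne_zero, hn]
    have hperiod : exp (2 * π * I * n) = 1 := by
      rw [← exp_int_mul_two_pi_mul_I n]; ring_nf
    simp [integral_exp_mul_complex hc, hperiod]

lemma integral_pow_mul_conj_pow_uniformCircle (a b : ℕ) :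
    ∫ z, z ^ a * conj z ^ b ∂uniformCircle = if a = b then 1 else 0 := by
  have hpow (t : ℝ) : exp (2 * π * t * I) ^ a * conj (exp (2 * π * t * I)) ^ b =
      exp (2 * π * I * ((a - b : ℤ) : ℂ) * t) := by
    rw [← Complex.exp_conj, ← Complex.exp_nat_mul, ← Complex.exp_nat_mul, ← Complex.exp_add]
    simp only [map_mul, conj_I, conj_ofReal, map_ofNat]
    push_cast
    ring_nf
  rw [uniformCircle, integral_map (by fun_prop)
    (by fun_prop : Continuous fun z : ℂ => z ^ a * conj z ^ b).aestronglyMeasurable]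
  simp_rw [hpow, integral_exp_two_pi_I_int_mul, sub_eq_zero, Nat.cast_inj]

lemma ae_norm_eq_one_uniformCircle : ∀ᵐ z ∂uniformCircle, ‖z‖ = 1 := by
  rw [uniformCircle, ae_map_iff (by fun_prop) (measurableSet_eq_fun (by fun_prop) (by fun_prop))]
  exact ae_of_all _ fun t => by simp [norm_exp]

lemma Fintype.prod_comp_eq_prod_pow_count {ι κ M : Type*} [Fintype ι] [DecidableEq ι]
    [Fintype κ] [CommMonoid M] (f : ι → M) (p : κ → ι) :
    ∏ i, f (p i) = ∏ j, f j ^ (univ.val.map p).count j := by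
  calc ∏ i, f (p i) = ((univ.val.map p).map f).prod := by rw [Multiset.map_map]; rfl
    _ = _ := by rw [Multiset.prod_map_eq_finprod, finprod_eq_prod_of_fintype]

section

variable {Ω ι : Type*} [MeasurableSpace Ω] {μ : Measure Ω} {X : ι → Ω → ℂ}

lemma ae_norm_eq_one (hmeas : ∀ j, Measurable (X j)) (hunif : ∀ j, μ.map (X j) = uniformCircle)
    (j : ι) : ∀ᵐ ω ∂μ, ‖X j ω‖ = 1 :=
  ae_of_ae_map (hmeas j).aemeasurable (hunif j ▸ ae_norm_eq_one_uniformCircle)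

lemma integrable_prod_mul_prod_conj [Countable ι] [IsFiniteMeasure μ]
    (hmeas : ∀ j, Measurable (X j)) (hunif : ∀ j, μ.map (X j) = uniformCircle)
    {m n : ℕ} (p : Fin m → ι) (q : Fin n → ι) :
    Integrable (fun ω => (∏ i, X (p i) ω) * ∏ i, conj (X (q i) ω)) μ := by
  refine .of_bound (by fun_prop) 1 ?_
  filter_upwards [ae_all_iff.2 (ae_norm_eq_one hmeas hunif)] with ω hω
  simp [norm_prod, hω]

variable [Fintype ι]

lemma integral_prod_pow_mul_conj_pow (hmeas : ∀ j, Measurable (X j)) (hindep : iIndepFun X μ)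
    (hunif : ∀ j, μ.map (X j) = uniformCircle) (a b : ι → ℕ) :
    ∫ ω, ∏ j, X j ω ^ a j * conj (X j ω) ^ b j ∂μ = if a = b then 1 else 0 := by
  rw [hindep.integral_fun_prod_comp (f := fun j z => z ^ a j * conj z ^ b j)
    (fun j => (hmeas j).aemeasurable) (fun j => (by fun_prop : Continuous _).aestronglyMeasurable)]
  have hmoment (j : ι) :
      ∫ ω, X j ω ^ a j * conj (X j ω) ^ b j ∂μ = if a j = b j then 1 else 0 := by
    rw [← integral_map (hmeas j).aemeasurable (by fun_prop : Continuous fun z : ℂ =>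
      z ^ a j * conj z ^ b j).aestronglyMeasurable, hunif, integral_pow_mul_conj_pow_uniformCircle]
  simp_rw [hmoment, Fintype.prod_boole, funext_iff]

lemma integral_prod_mul_prod_conj [DecidableEq ι] (hmeas : ∀ j, Measurable (X j))
    (hindep : iIndepFun X μ) (hunif : ∀ j, μ.map (X j) = uniformCircle)
    {m n : ℕ} (p : Fin m → ι) (q : Fin n → ι) :
    ∫ ω, (∏ i, X (p i) ω) * ∏ i, conj (X (q i) ω) ∂μ =
      if univ.val.map p = univ.val.map q then 1 else 0 := by
  have hgroup (ω : Ω) : (∏ i, X (p i) ω) * ∏ i, conj (X (q i) ω) =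
      ∏ j, X j ω ^ (univ.val.map p).count j * conj (X j ω) ^ (univ.val.map q).count j := by
    rw [Fintype.prod_comp_eq_prod_pow_count (X · ω),
      Fintype.prod_comp_eq_prod_pow_count (conj <| X · ω), ← prod_mul_distrib]
  simp only [hgroup, integral_prod_pow_mul_conj_pow hmeas hindep hunif, funext_iff,
    ← Multiset.ext]

end

lemma sum_sum_boole_map_eq {ι R : Type*} [Fintype ι] [DecidableEq ι] [AddCommMonoidWithOne R]
    (k l : ℕ) :
    ∑ p : Fin k → ι, ∑ q : Fin l → ι,
        (if univ.val.map p = univ.val.map q then (1 : R) else 0) =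
      if k = l then
        (#{r : (Fin k → ι) × (Fin k → ι) | univ.val.map r.1 = univ.val.map r.2} : R)
      else 0 := by
  split_ifs with hkl
  · subst hkl
    rw [← sum_product', univ_product_univ, sum_boole]
  · refine sum_eq_zero fun p _ => sum_eq_zero fun q _ => if_neg fun h => hkl ?_
    simpa using congrArg Multiset.card h

lemma natCard_pairs_map_eq_of_equiv {ι α β : Type*} [Fintype ι] (s : Finset β) (e : α ≃ s) :
    Nat.card {p : (ι → β) × (ι → β) // (∀ j, p.1 j ∈ s) ∧ (∀ j, p.2 j ∈ s) ∧
      univ.val.map p.1 = univ.val.map p.2} =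
    Nat.card {r : (ι → α) × (ι → α) // univ.val.map r.1 = univ.val.map r.2} := by
  have he : Function.Injective fun a => (e a : β) := Subtype.val_injective.comp e.injective
  exact Nat.card_congr
    { toFun := fun p =>
        ⟨(fun j => e.symm ⟨p.1.1 j, p.2.1 j⟩, fun j => e.symm ⟨p.1.2 j, p.2.2.1 j⟩),
        Multiset.map_injective he <| by simpa [Multiset.map_map, Function.comp_def] using p.2.2.2⟩
      invFun := fun r => ⟨(fun j => e (r.1.1 j), fun j => e (r.1.2 j)), fun j => (e _).2,
        fun j => (e _).2, by
          simpa [Multiset.map_map, Function.comp_def] using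
            congrArg (Multiset.map (e · |>.val)) r.2⟩
      left_inv := fun p => by ext <;> simp
      right_inv := fun r => by ext <;> simp }

lemma Bcount_eq_card (k H : ℕ) :
    Bcount k H =
      #{r : (Fin k → Fin H) × (Fin k → Fin H) | univ.val.map r.1 = univ.val.map r.2} := by
  rw [Bcount,
    natCard_pairs_map_eq_of_equiv _ ((Icc 1 H).orderIsoOfFin (k := H) (by simp)).toEquiv,
    Nat.card_eq_fintype_card, Fintype.card_subtype]

theorem mixed_moments_eq_general
    {Ω : Type*} [MeasurableSpace Ω] (μ : Measure Ω) [IsProbabilityMeasure μ]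
    (H : ℕ)
    (X : Fin H → Ω → ℂ)
    (hmeas : ∀ j, Measurable (X j))
    (hindep : iIndepFun X μ)
    (hunif : ∀ j, Measure.map (X j) μ = uniformCircle)
    (k l : ℕ) :
    ∫ ω, ((∑ j, X j ω) ^ k * (starRingEnd ℂ (∑ j, X j ω)) ^ l) ∂μ =
      if k = l then (Bcount k H : ℂ) else 0 := by
  have hexpand (ω : Ω) : (∑ j, X j ω) ^ k * conj (∑ j, X j ω) ^ l =
      ∑ p : Fin k → Fin H, ∑ q : Fin l → Fin H,
        (∏ i, X (p i) ω) * ∏ i, conj (X (q i) ω) := by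
    rw [Fintype.sum_pow, map_sum, Fintype.sum_pow, sum_mul_sum]
  simp_rw [hexpand]
  rw [integral_finsetSum _ fun p _ => integrable_finsetSum _ fun q _ =>
    integrable_prod_mul_prod_conj hmeas hunif p q]
  simp_rw [integral_finsetSum _ fun q _ => integrable_prod_mul_prod_conj hmeas hunif _ q,
    integral_prod_mul_prod_conj hmeas hindep hunif, sum_sum_boole_map_eq, Bcount_eq_card]

/-- `E[Z_H^k conj(Z_H)^l]` equals `B_k(H)` if `k = l` and `0` otherwise,
where `Z_H = X_1 + ⋯ + X_H` with the `X_j` independent and uniform on the unit circle. -/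
theorem mixed_moments_eq
    {Ω : Type*} [MeasurableSpace Ω] (μ : Measure Ω) [IsProbabilityMeasure μ]
    (H : ℕ) (hH : 1 ≤ H)
    (X : Fin H → Ω → ℂ)
    (hmeas : ∀ j, Measurable (X j))
    (hindep : iIndepFun X μ)
    (hunif : ∀ j, Measure.map (X j) μ = uniformCircle)
    (k l : ℕ) :
    ∫ ω, ((∑ j, X j ω) ^ k * (starRingEnd ℂ (∑ j, X j ω)) ^ l) ∂μ =
      if k = l then (Bcount k H : ℂ) else 0 :=
  mixed_moments_eq_general μ H X hmeas hindep hunif k l
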